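/- Derivative of the mean divergence under exponential tilting: Let Δ : ℕ → [0,∞) and β* ≥ 0 be such that ∑_j exp(−β·Δ_j) < ∞ for every β > β*. Define Z(β) := ∑_j exp(−β·Δ_j) and Φ(β) := (∑_j Δ_j·exp(−β·Δ_j))/Z(β). Then for every β > β*, Φ is differentiable at β and Φ′(β) = −( ∑_j Δ_j²·exp(−β·Δ_j)/Z(β) − Φ(β)² ), i.e. Φ′(β) equals minus the variance of Δ under the Gibbs distribution with parameter β. -/

import Mathlib

open Real
open scoped Nat

/-! Differentiate `Z(β) = ∑ exp(-β Δ_j)` and `N(β) = ∑ Δ_j exp(-β Δ_j)` term by term and apply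
the quotient rule. Term-by-term differentiation on `(c, ∞)`, `c > β*`, is justified by the
summable majorant `Δ_j^k exp(-c Δ_j)`: polynomial factors are absorbed by lowering the exponent
slightly, since `x^k ≤ k! ε^{-k} exp(ε x)` for `x ≥ 0`. -/

section TiltedMoment

variable {ι : Type*} {f : ι → ℝ} {a β : ℝ}

/-- In the paper's notation `Z = tiltedMoment Δ 0` and `Φ = tiltedMoment Δ 1 / tiltedMoment Δ 0`. -/
noncomputable def tiltedMoment (f : ι → ℝ) (k : ℕ) (b : ℝ) : ℝ :=
  ∑' j, f j ^ k * exp (-b * f j)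

lemma pow_mul_exp_neg_le {x a b : ℝ} (hx : 0 ≤ x) (hab : a < b) (k : ℕ) :
    x ^ k * exp (-b * x) ≤ k ! / (b - a) ^ k * exp (-a * x) := by
  have hε : 0 < b - a := sub_pos.2 hab
  have hexp := pow_div_factorial_le_exp _ (mul_nonneg hε.le hx) k
  calc x ^ k * exp (-b * x)
      = ((b - a) * x) ^ k / k ! * (k ! / (b - a) ^ k) * exp (-b * x) := by
        rw [mul_pow]; field_simp
    _ ≤ exp ((b - a) * x) * (k ! / (b - a) ^ k) * exp (-b * x) := by gcongr
    _ = k ! / (b - a) ^ k * exp (-a * x) := by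
        rw [mul_comm (exp _), mul_assoc, ← exp_add]; ring_nf

lemma summable_pow_mul_exp_neg (hf : ∀ j, 0 ≤ f j) {b : ℝ} (hab : a < b)
    (ha : Summable fun j => exp (-a * f j)) (k : ℕ) :
    Summable fun j => f j ^ k * exp (-b * f j) :=
  .of_nonneg_of_le (fun j => by have := hf j; positivity)
    (fun j => pow_mul_exp_neg_le (hf j) hab k) (ha.mul_left _)

lemma hasDerivAt_pow_mul_exp_neg (x : ℝ) (k : ℕ) (β : ℝ) :
    HasDerivAt (fun b => x ^ k * exp (-b * x)) (-(x ^ (k + 1) * exp (-β * x))) β :=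
  (((hasDerivAt_neg β).mul_const x).exp.const_mul (x ^ k)).congr_deriv (by ring)

lemma hasDerivAt_tiltedMoment (hf : ∀ j, 0 ≤ f j) (ha : Summable fun j => exp (-a * f j))
    (haβ : a < β) (k : ℕ) :
    HasDerivAt (tiltedMoment f k) (-tiltedMoment f (k + 1) β) β := by
  obtain ⟨c, hac, hcβ⟩ := exists_between haβ
  have hbound : ∀ j, ∀ y ∈ Set.Ioi c,
      ‖-(f j ^ (k + 1) * exp (-y * f j))‖ ≤ f j ^ (k + 1) * exp (-c * f j) := by
    intro j y hy
    have hfj := hf j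
    rw [norm_neg, Real.norm_of_nonneg (by positivity)]
    gcongr
    exact hy.le
  have h := hasDerivAt_tsum_of_isPreconnected (summable_pow_mul_exp_neg hf hac ha (k + 1))
    isOpen_Ioi isPreconnected_Ioi (fun j y _ => hasDerivAt_pow_mul_exp_neg (f j) k y) hbound
    hcβ (summable_pow_mul_exp_neg hf haβ ha k) hcβ
  rwa [tsum_neg] at h

lemma tiltedMoment_zero_pos [Nonempty ι] (ha : Summable fun j => exp (-a * f j)) :
    0 < tiltedMoment f 0 a := by
  simp only [tiltedMoment, pow_zero, one_mul]
  exact ha.tsum_pos (fun j => (exp_pos _).le) (Classical.arbitrary ι) (exp_pos _)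

end TiltedMoment

theorem mean_divergence_deriv_general
    (Δ : ℕ → ℝ) (hΔ : ∀ j, 0 ≤ Δ j) (βs : ℝ)
    (hsum : ∀ β > βs, Summable fun j => Real.exp (-β * Δ j)) :
    ∀ β > βs,
      HasDerivAt
        (fun b : ℝ =>
          (∑' j, Δ j * Real.exp (-b * Δ j)) / (∑' j, Real.exp (-b * Δ j)))
        (-((∑' j, (Δ j) ^ 2 * Real.exp (-β * Δ j)) / (∑' j, Real.exp (-β * Δ j))
            - ((∑' j, Δ j * Real.exp (-β * Δ j)) / (∑' j, Real.exp (-β * Δ j))) ^ 2))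
        β := by
  intro β hβ
  obtain ⟨a, hβsa, haβ⟩ := exists_between hβ
  have hZ := hasDerivAt_tiltedMoment hΔ (hsum a hβsa) haβ 0
  have hN := hasDerivAt_tiltedMoment hΔ (hsum a hβsa) haβ 1
  have hZpos := tiltedMoment_zero_pos (hsum β hβ)
  have hΦ : HasDerivAt (fun b => tiltedMoment Δ 1 b / tiltedMoment Δ 0 b) _ β :=
    hN.div hZ hZpos.ne'
  simp only [tiltedMoment, pow_zero, pow_one, one_mul, zero_add] at hΦ hZpos
  refine hΦ.congr_deriv ?_
  field_simp
  ring

/-- **Derivative of the mean divergence under exponential tilting.**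
If `Z(β) = ∑ exp(-β Δ_j) < ∞` for all `β > β*`, then the mean divergence
`Φ(β) = (∑ Δ_j exp(-β Δ_j))/Z(β)` is differentiable on `(β*, ∞)` with
`Φ'(β) = -((∑ Δ_j² exp(-β Δ_j))/Z(β) - Φ(β)²)`, i.e. minus the variance of
`Δ` under the Gibbs distribution with parameter `β`. -/
theorem mean_divergence_deriv
    (Δ : ℕ → ℝ) (hΔ : ∀ j, 0 ≤ Δ j) (βs : ℝ) (hβs : 0 ≤ βs)
    (hsum : ∀ β > βs, Summable fun j => Real.exp (-β * Δ j)) :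
    ∀ β > βs,
      HasDerivAt
        (fun b : ℝ =>
          (∑' j, Δ j * Real.exp (-b * Δ j)) / (∑' j, Real.exp (-b * Δ j)))
        (-((∑' j, (Δ j) ^ 2 * Real.exp (-β * Δ j)) / (∑' j, Real.exp (-β * Δ j))
            - ((∑' j, Δ j * Real.exp (-β * Δ j)) / (∑' j, Real.exp (-β * Δ j))) ^ 2))
        β :=
  mean_divergence_deriv_general Δ hΔ βs hsum
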